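/- An r×n ρ-latin rectangle L on symbols [k] can be completed to an n×n ρ-latin square if and only if ρ_ℓ − e_ℓ ≤ n − r for all ℓ and, for all J ⊆ [n] (columns) and K ⊆ [k] (symbols), Σ_{ℓ∈K}(ρ_ℓ − e_ℓ) ≤ |J|(n − r) + μ_K([n] \ J), where μ_K([n] \ J) = Σ_{j∉J} |{ℓ ∈ K : ℓ missing in column j}|. -/

import Mathlib

open Finset

/-- `L` is a (partial) latin array: each symbol occurs at most once in each
row and at most once in each column. -/
def latinArr {r s k : ℕ} (L : Fin r → Fin s → Fin k) : Prop :=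
  (∀ i, Function.Injective (L i)) ∧ (∀ j, Function.Injective (fun i => L i j))

/-- Number of occurrences of symbol `ℓ` in `L`. -/
def symCount {r s k : ℕ} (L : Fin r → Fin s → Fin k) (ℓ : Fin k) : ℕ :=
  ((univ : Finset (Fin r × Fin s)).filter (fun p => L p.1 p.2 = ℓ)).card

/-- `μ_I(ℓ)`: number of rows in `I` in which symbol `ℓ` is missing. -/
def muRows {r s k : ℕ} (L : Fin r → Fin s → Fin k) (I : Finset (Fin r)) (ℓ : Fin k) : ℕ :=
  (I.filter (fun i => ∀ j, L i j ≠ ℓ)).card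

/-- `μ_J(ℓ)`: number of columns in `J` in which symbol `ℓ` is missing. -/
def muCols {r s k : ℕ} (L : Fin r → Fin s → Fin k) (J : Finset (Fin s)) (ℓ : Fin k) : ℕ :=
  (J.filter (fun j => ∀ i, L i j ≠ ℓ)).card

/-- `μ_K(i)` for a row `i`: number of symbols of `K` missing in row `i`. -/
def muSymRow {r s k : ℕ} (L : Fin r → Fin s → Fin k) (K : Finset (Fin k)) (i : Fin r) : ℕ :=
  (K.filter (fun ℓ => ∀ j, L i j ≠ ℓ)).card

/-- `μ_K(j)` for a column `j`: number of symbols of `K` missing in column `j`. -/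
def muSymCol {r s k : ℕ} (L : Fin r → Fin s → Fin k) (K : Finset (Fin k)) (j : Fin s) : ℕ :=
  (K.filter (fun ℓ => ∀ i, L i j ≠ ℓ)).card

/-- `S` is an `n × n` `ρ`-latin square. -/
def rhoLatinSquare {n k : ℕ} (ρ : Fin k → ℕ) (S : Fin n → Fin n → Fin k) : Prop :=
  latinArr S ∧ ∀ ℓ, symCount S ℓ = ρ ℓ

/-- `S` extends `L` on the top-left `r × s` corner. -/
def extends' {r s n k : ℕ} (hr : r ≤ n) (hs : s ≤ n)
    (L : Fin r → Fin s → Fin k) (S : Fin n → Fin n → Fin k) : Prop :=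
  ∀ i j, S (Fin.castLE hr i) (Fin.castLE hs j) = L i j


/-!
Put `t = n - r` and let `G` join each column `j` to the symbols missing from column `j` of `L`.
A completion is the same as `t` new rows, i.e. `t` pairwise disjoint matchings of `G` saturating
the columns in which symbol `ℓ` is used `d ℓ = ρ ℓ - e ℓ` times. Such rows exist iff `d ≤ t` and
`G` has a subgraph with all column degrees `t` and symbol degrees `d`: the union of the rows is
one, and conversely such a subgraph splits into `t` matchings (König), each time removing a
matching that covers the columns and all symbols of degree `t`, found by Hall's theorem in a
`t`-regular bipartite multigraph containing the subgraph.

The subgraph exists iff `∑_{ℓ∈K} d ℓ ≤ t |J| + e_G([n] \ J, K)` for all `J`, `K`, where the last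
term, the number of edges of `G` from columns outside `J` to symbols in `K`, is `μ_K([n] \ J)`.
Necessity is double counting. Sufficiency is by induction on `∑ d`: tight pairs `(J, K)` are
closed under union because `e_G` is submodular, and for a symbol `ℓ` with `d ℓ > 0` there is an
edge `(j, ℓ)` with `j` outside the largest tight `J` whose `K` avoids `ℓ`; removing it keeps the
cut condition.
-/

lemma sum_tsub_single_add {ι : Type*} [DecidableEq ι] (s : Finset ι) {f : ι → ℕ} {i : ι}
    (hi : f i ≠ 0) :
    ∑ x ∈ s, (f - Pi.single i 1 : ι → ℕ) x + (if i ∈ s then 1 else 0) = ∑ x ∈ s, f x := by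
  rw [← sum_pi_single', ← sum_add_distrib]
  refine sum_congr rfl fun x _ => ?_
  rcases eq_or_ne x i with rfl | hx <;> simp_all
  omega

lemma exists_injective_of_sum_eq_of_sum_le {ι κ : Type*} [Fintype ι] [Fintype κ] [DecidableEq κ]
    (w : ι → κ → ℕ) {t : ℕ} (ht : 0 < t) (hrow : ∀ i, ∑ j, w i j = t)
    (hcol : ∀ j, ∑ i, w i j ≤ t) : ∃ f : ι → κ, Function.Injective f ∧ ∀ i, w i (f i) ≠ 0 := by
  let N : ι → Finset κ := fun i => {j | w i j ≠ 0}
  suffices hall : ∀ s : Finset ι, #s ≤ #(s.biUnion N) by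
    obtain ⟨f, hf, hfN⟩ := (all_card_le_biUnion_card_iff_exists_injective N).1 hall
    exact ⟨f, hf, fun i => by simpa [N] using hfN i⟩
  intro s
  refine Nat.le_of_mul_le_mul_left ?_ ht
  calc t * #s = ∑ i ∈ s, ∑ j ∈ s.biUnion N, w i j := by
        rw [mul_comm, ← smul_eq_mul, ← sum_const]
        refine sum_congr rfl fun i hi => ?_
        rw [← hrow i]
        refine (sum_subset (subset_univ _) fun j _ hj => ?_).symm
        by_contra hw
        exact hj (mem_biUnion.2 ⟨i, hi, by simpa [N] using hw⟩)
    _ = ∑ j ∈ s.biUnion N, ∑ i ∈ s, w i j := sum_comm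
    _ ≤ ∑ j ∈ s.biUnion N, t :=
        sum_le_sum fun j _ => (sum_le_sum_of_subset (subset_univ s)).trans (hcol j)
    _ = t * #(s.biUnion N) := by rw [sum_const, smul_eq_mul, mul_comm]

section Bipartite

variable {α β : Type*} [DecidableEq α] [DecidableEq β]

def crossing (G : Finset (α × β)) (J : Finset α) (K : Finset β) : ℕ :=
  #{p ∈ G | p.1 ∉ J ∧ p.2 ∈ K}

def CutCondition (G : Finset (α × β)) (c : α → ℕ) (d : β → ℕ) : Prop :=
  ∀ J K, ∑ b ∈ K, d b ≤ ∑ a ∈ J, c a + crossing G J K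

lemma crossing_union_add_crossing_inter_le (G : Finset (α × β)) (J J' : Finset α)
    (K K' : Finset β) :
    crossing G (J ∪ J') (K ∪ K') + crossing G (J ∩ J') (K ∩ K') ≤
      crossing G J K + crossing G J' K' := by
  simp only [crossing, card_filter, ← sum_add_distrib]
  refine sum_le_sum fun p _ => ?_
  simp only [mem_union, mem_inter]
  split_ifs <;> simp_all

lemma crossing_erase_add {G : Finset (α × β)} {e : α × β} (he : e ∈ G) (J : Finset α)
    (K : Finset β) :
    crossing (G.erase e) J K + (if e.1 ∉ J ∧ e.2 ∈ K then 1 else 0) = crossing G J K := by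
  rw [crossing, crossing, filter_erase]
  split_ifs with h
  · rw [card_erase_add_one (mem_filter.2 ⟨he, h⟩)]
  · have he' : e ∉ {p ∈ G | p.1 ∉ J ∧ p.2 ∈ K} := fun hm => h (mem_filter.1 hm).2
    rw [erase_eq_of_notMem he', add_zero]

def IsTight (G : Finset (α × β)) (c : α → ℕ) (d : β → ℕ) (J : Finset α) (K : Finset β) : Prop :=
  ∑ b ∈ K, d b = ∑ a ∈ J, c a + crossing G J K

namespace CutCondition

variable {G : Finset (α × β)} {c : α → ℕ} {d : β → ℕ}

lemma isTight_union (hcut : CutCondition G c d) {J J' : Finset α} {K K' : Finset β}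
    (h : IsTight G c d J K) (h' : IsTight G c d J' K') : IsTight G c d (J ∪ J') (K ∪ K') := by
  have hsub := crossing_union_add_crossing_inter_le G J J' K K'
  have hunion := hcut (J ∪ J') (K ∪ K')
  have hinter := hcut (J ∩ J') (K ∩ K')
  have hd := sum_union_inter (s₁ := K) (s₂ := K') (f := d)
  have hc := sum_union_inter (s₁ := J) (s₂ := J') (f := c)
  unfold IsTight at *
  omega

lemma exists_edge_outside_tight [Fintype α] [Fintype β] (hcut : CutCondition G c d) {b : β}
    (hb : d b ≠ 0) :
    ∃ a, c a ≠ 0 ∧ (a, b) ∈ G ∧ ∀ J K, b ∉ K → IsTight G c d J K → a ∉ J := by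
  classical
  obtain ⟨⟨J₁, K₁⟩, h₁, hmax⟩ :=
    exists_max_image {JK : Finset α × Finset β | b ∉ JK.2 ∧ IsTight G c d JK.1 JK.2}
      (fun JK => #JK.1) ⟨(∅, ∅), mem_filter.2 ⟨mem_univ _, by simp [IsTight, crossing]⟩⟩
  simp only [mem_filter, mem_univ, true_and, Prod.forall] at h₁ hmax
  have hmaximal : ∀ J K, b ∉ K → IsTight G c d J K → J ⊆ J₁ := fun J K hbK hJK =>
    have hcard := hmax _ _ ⟨by simp [hbK, h₁.1], hcut.isTight_union hJK h₁.2⟩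
    (union_subset_iff.1 (eq_of_subset_of_card_le subset_union_right hcard).symm.le).1
  obtain ⟨a, hca, hab, haJ₁⟩ : ∃ a, c a ≠ 0 ∧ (a, b) ∈ G ∧ a ∉ J₁ := by
    by_contra! hno
    -- otherwise adding `b` to `K₁` (and the columns of capacity `0` to `J₁`) violates the cut
    have hcut₂ := hcut (J₁ ∪ ({a | c a = 0} : Finset α)) (insert b K₁)
    have hc : ∑ a ∈ J₁ ∪ ({a | c a = 0} : Finset α), c a = ∑ a ∈ J₁, c a :=
      (sum_subset subset_union_left fun a ha haJ₁ => by simp_all).symm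
    have hd : ∑ b ∈ insert b K₁, d b = d b + ∑ b ∈ K₁, d b := sum_insert h₁.1
    have hcr : crossing G (J₁ ∪ ({a | c a = 0} : Finset α)) (insert b K₁) ≤ crossing G J₁ K₁ := by
      refine card_le_card fun p hp => ?_
      simp only [mem_filter, mem_union, mem_insert, not_or] at hp ⊢
      obtain ⟨hpG, ⟨hpJ₁, hpc⟩, rfl | hpK⟩ := hp
      · exact absurd (hno p.1 (by simpa using hpc) hpG) hpJ₁
      · exact ⟨hpG, hpJ₁, hpK⟩
    unfold IsTight at h₁
    omega
  exact ⟨a, hca, hab, fun J K hbK hJK haJ => haJ₁ (hmaximal J K hbK hJK haJ)⟩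

lemma erase (hcut : CutCondition G c d) {a : α} {b : β} (hab : (a, b) ∈ G) (ha : c a ≠ 0)
    (hb : d b ≠ 0) (htight : ∀ J K, b ∉ K → IsTight G c d J K → a ∉ J) :
    CutCondition (G.erase (a, b)) (c - Pi.single a 1) (d - Pi.single b 1) := by
  intro J K
  have hK := sum_tsub_single_add K hb
  have hJ := sum_tsub_single_add J ha
  have hcr := crossing_erase_add hab J K
  have := hcut J K
  have hnt : b ∉ K → a ∈ J → ¬ IsTight G c d J K := fun hbK haJ h => htight J K hbK h haJ
  unfold IsTight at hnt
  by_cases hbK : b ∈ K <;> by_cases haJ : a ∈ J <;>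
    simp only [hbK, haJ, if_true, if_false, not_true_eq_false, not_false_eq_true, and_true,
      and_false, false_implies, forall_const] at hK hJ hcr hnt <;>
    omega

end CutCondition

lemma card_fiber_fst_insert [Fintype β] {E : Finset (α × β)} {e : α × β} (he : e ∉ E) (a : α) :
    #{b | (a, b) ∈ insert e E} = #{b | (a, b) ∈ E} + if e.1 = a then 1 else 0 := by
  split_ifs with h
  · subst h
    have : ({b | (e.1, b) ∈ insert e E} : Finset β) =
        insert e.2 ({b | (e.1, b) ∈ E} : Finset β) := by
      ext b; simp [Prod.ext_iff, eq_comm]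
    rw [this, card_insert_of_notMem (by simpa using he)]
  · congr 1; ext b; simp [Prod.ext_iff, Ne.symm h]

lemma card_fiber_snd_insert [Fintype α] {E : Finset (α × β)} {e : α × β} (he : e ∉ E) (b : β) :
    #{a | (a, b) ∈ insert e E} = #{a | (a, b) ∈ E} + if e.2 = b then 1 else 0 := by
  split_ifs with h
  · subst h
    have : ({a | (a, e.2) ∈ insert e E} : Finset α) =
        insert e.1 ({a | (a, e.2) ∈ E} : Finset α) := by
      ext a; simp [Prod.ext_iff, eq_comm]
    rw [this, card_insert_of_notMem (by simpa using he)]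
  · congr 1; ext a; simp [Prod.ext_iff, Ne.symm h]

theorem CutCondition.exists_subset_degrees [Fintype α] [Fintype β] {G : Finset (α × β)}
    {c : α → ℕ} {d : β → ℕ} (hcut : CutCondition G c d) (hsum : ∑ a, c a = ∑ b, d b) :
    ∃ E ⊆ G, (∀ a, #{b | (a, b) ∈ E} = c a) ∧ ∀ b, #{a | (a, b) ∈ E} = d b := by
  induction hN : ∑ b, d b using Nat.strong_induction_on generalizing G c d with
  | _ N ih =>
  rcases eq_or_ne N 0 with rfl | hN0
  · refine ⟨∅, empty_subset _, fun a => ?_, fun b => ?_⟩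
    · simpa using ((sum_eq_zero_iff.1 (hsum.trans hN)) a (mem_univ a)).symm
    · simpa using ((sum_eq_zero_iff.1 hN) b (mem_univ b)).symm
  obtain ⟨b, -, hb⟩ := exists_ne_zero_of_sum_ne_zero (hN ▸ hN0)
  obtain ⟨a, ha, hab, htight⟩ := hcut.exists_edge_outside_tight hb
  have hd := sum_tsub_single_add univ hb
  have hc := sum_tsub_single_add univ ha
  simp only [mem_univ, if_true] at hd hc
  obtain ⟨E, hEG, hEc, hEd⟩ := ih _ (by omega) (hcut.erase hab ha hb htight) (by omega) rfl
  have habE : (a, b) ∉ E := fun h => by simpa using hEG h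
  refine ⟨insert (a, b) E, insert_subset hab (hEG.trans (erase_subset _ _)), fun a' => ?_,
    fun b' => ?_⟩
  · rw [card_fiber_fst_insert habE, hEc]
    rcases eq_or_ne a a' with rfl | h <;> simp [*]
    omega
  · rw [card_fiber_snd_insert habE, hEd]
    rcases eq_or_ne b b' with rfl | h <;> simp [*]
    omega

lemma sum_card_fiber_fst [Fintype β] (E : Finset (α × β)) (J : Finset α) :
    ∑ a ∈ J, #{b | (a, b) ∈ E} = #{p ∈ E | p.1 ∈ J} := by
  rw [card_eq_sum_card_fiberwise (s := {p ∈ E | p.1 ∈ J}) (f := Prod.fst) (t := J)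
    fun p hp => (mem_filter.1 hp).2]
  refine sum_congr rfl fun a ha => card_nbij' (fun b => (a, b)) Prod.snd ?_ ?_ ?_ ?_ <;>
    intro x hx <;> grind

lemma sum_card_fiber_snd [Fintype α] (E : Finset (α × β)) (K : Finset β) :
    ∑ b ∈ K, #{a | (a, b) ∈ E} = #{p ∈ E | p.2 ∈ K} := by
  rw [card_eq_sum_card_fiberwise (s := {p ∈ E | p.2 ∈ K}) (f := Prod.snd) (t := K)
    fun p hp => (mem_filter.1 hp).2]
  refine sum_congr rfl fun b hb => card_nbij' (fun a => (a, b)) Prod.fst ?_ ?_ ?_ ?_ <;>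
    intro x hx <;> grind

lemma crossing_eq_sum [Fintype α] [Fintype β] (G : Finset (α × β)) (J : Finset α)
    (K : Finset β) :
    crossing G J K = ∑ a ∈ Jᶜ, #{b ∈ K | (a, b) ∈ G} := by
  have : crossing G J K = #{p ∈ {p ∈ G | p.2 ∈ K} | p.1 ∈ Jᶜ} := by
    simp only [crossing, filter_filter, mem_compl, and_comm]
  rw [this, ← sum_card_fiber_fst]
  refine sum_congr rfl fun a _ => congrArg card ?_
  ext b; simp [and_comm]

lemma cutCondition_of_subset [Fintype α] [Fintype β] {G E : Finset (α × β)} {c : α → ℕ}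
    {d : β → ℕ} (hEG : E ⊆ G) (hc : ∀ a, #{b | (a, b) ∈ E} = c a)
    (hd : ∀ b, #{a | (a, b) ∈ E} = d b) :
    CutCondition G c d := by
  intro J K
  simp_rw [← hc, ← hd, sum_card_fiber_fst, sum_card_fiber_snd]
  calc #{p ∈ E | p.2 ∈ K} ≤ #({p ∈ E | p.1 ∈ J} ∪ {p ∈ G | p.1 ∉ J ∧ p.2 ∈ K}) :=
        card_le_card fun p hp => by
          simp only [mem_filter, mem_union] at hp ⊢
          by_cases hpJ : p.1 ∈ J
          exacts [.inl ⟨hp.1, hpJ⟩, .inr ⟨hEG hp.1, hpJ, hp.2⟩]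
    _ ≤ _ := card_union_le _ _

lemma exists_matching_covering_max_degree [Fintype α] [Fintype β] {E : Finset (α × β)}
    {t : ℕ} (ht : 0 < t) (hα : ∀ a, #{b | (a, b) ∈ E} = t) (hβ : ∀ b, #{a | (a, b) ∈ E} ≤ t) :
    ∃ f : α → β, Function.Injective f ∧ (∀ a, (a, f a) ∈ E) ∧
      ∀ b, #{a | (a, b) ∈ E} = t → ∃ a, f a = b := by
  -- a `t`-regular bipartite multigraph between `α ⊕ β` and `β ⊕ α`: `E`, its mirror image, and
  -- `t - deg b` parallel edges joining the two copies of each `b`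
  let w : α ⊕ β → β ⊕ α → ℕ :=
    Sum.elim (fun a => Sum.elim (fun b => if (a, b) ∈ E then 1 else 0) 0)
      (fun b => Sum.elim (fun b' => if b = b' then t - #{a | (a, b) ∈ E} else 0)
        (fun a => if (a, b) ∈ E then 1 else 0))
  have hrow : ∀ x, ∑ y, w x y = t := by
    rintro (a | b)
    · simpa [w, Fintype.sum_sum_type] using hα a
    · simp [w, Fintype.sum_sum_type, Nat.sub_add_cancel (hβ b)]
  have hcol : ∀ y, ∑ x, w x y ≤ t := by
    rintro (b | a)
    · simp [w, Fintype.sum_sum_type, Nat.add_sub_cancel' (hβ b)]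
    · simp [w, Fintype.sum_sum_type, hα a]
  obtain ⟨g, hg, hgw⟩ := exists_injective_of_sum_eq_of_sum_le w ht hrow hcol
  have hgbij : Function.Bijective g :=
    (Fintype.bijective_iff_injective_and_card g).2 ⟨hg, by simp [add_comm]⟩
  have hleft : ∀ a, ∃ b, g (.inl a) = .inl b ∧ (a, b) ∈ E := by
    intro a
    have hwa := hgw (.inl a)
    rcases h : g (.inl a) with b | a' <;> simp [h, w] at hwa
    exact ⟨b, rfl, hwa⟩
  choose f hgf hfE using hleft
  refine ⟨f, fun a a' h => Sum.inl_injective (hg (by rw [hgf, hgf, h])), hfE, fun b hb => ?_⟩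
  obtain ⟨x | b', hx⟩ := hgbij.2 (.inl b)
  · exact ⟨x, Sum.inl_injective ((hgf x).symm.trans hx)⟩
  · have := hgw (.inr b')
    rw [hx] at this
    simp only [w, Sum.elim_inr, Sum.elim_inl, ne_eq, ite_eq_right_iff, Classical.not_imp] at this
    obtain ⟨rfl, hne⟩ := this
    exact absurd hb (by omega)

theorem exists_matching_decomposition [Fintype α] [Fintype β] (t : ℕ) {E : Finset (α × β)}
    (hα : ∀ a, #{b | (a, b) ∈ E} = t) (hβ : ∀ b, #{a | (a, b) ∈ E} ≤ t) :
    ∃ F : Fin t → α → β, (∀ i, Function.Injective (F i)) ∧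
      (∀ a, Function.Injective fun i => F i a) ∧ ∀ a b, (a, b) ∈ E ↔ ∃ i, F i a = b := by
  induction t generalizing E with
  | zero =>
    refine ⟨fun i => i.elim0, fun i => i.elim0, fun _ i => i.elim0, fun a b => ?_⟩
    have : ({b | (a, b) ∈ E} : Finset β) = ∅ := card_eq_zero.1 (hα a)
    simpa using (filter_eq_empty_iff.1 this) (mem_univ b)
  | succ t ih =>
    obtain ⟨f, hf, hfE, hfcover⟩ := exists_matching_covering_max_degree t.succ_pos hα hβ
    set E' : Finset (α × β) := {p ∈ E | p.2 ≠ f p.1}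
    have hα' : ∀ a, #{b | (a, b) ∈ E'} = t := fun a => by
      have : ({b | (a, b) ∈ E'} : Finset β) = ({b | (a, b) ∈ E} : Finset β).erase (f a) := by
        ext b; simp [E', and_comm]
      rw [this, card_erase_of_mem (by simpa using hfE a), hα a, Nat.add_sub_cancel]
    have hβ' : ∀ b, #{a | (a, b) ∈ E'} ≤ t := fun b => by
      by_cases hb : ∃ a₀, f a₀ = b
      · obtain ⟨a₀, rfl⟩ := hb
        have : ({a | (a, f a₀) ∈ E'} : Finset α) ⊆ ({a | (a, f a₀) ∈ E} : Finset α).erase a₀ :=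
          fun a => by simp only [E', mem_filter, mem_univ, true_and, mem_erase]; grind
        have := (card_le_card this).trans_eq (card_erase_of_mem (by simpa using hfE a₀))
        have := hβ (f a₀)
        omega
      · have hlt : #{a | (a, b) ∈ E} ≠ t + 1 := fun h => hb (hfcover b h)
        have : ({a | (a, b) ∈ E'} : Finset α) ⊆ ({a | (a, b) ∈ E} : Finset α) :=
          fun a => by simp +contextual [E']
        have := card_le_card this
        have := hβ b
        omega
    obtain ⟨F, hF, hFcol, hFE⟩ := ih hα' hβ'
    have hF_ne : ∀ i a, F i a ≠ f a := fun i a => (mem_filter.1 ((hFE a (F i a)).2 ⟨i, rfl⟩)).2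
    refine ⟨Fin.cons f F, Fin.cases hf hF, fun a => ?_, fun a b => ?_⟩
    · have : (fun i => (Fin.cons f F : Fin (t + 1) → α → β) i a) = Fin.cons (f a) (F · a) := by
        ext i; cases i using Fin.cases <;> rfl
      rw [this, Fin.cons_injective_iff]
      exact ⟨fun ⟨i, hi⟩ => hF_ne i a hi, hFcol a⟩
    · simp only [Fin.exists_fin_succ, Fin.cons_zero, Fin.cons_succ, ← hFE, E', mem_filter]
      constructor
      · intro h; by_cases hb : f a = b <;> simp_all [eq_comm]
      · rintro (rfl | ⟨h, -⟩)
        exacts [hfE a, h]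

lemma card_rows_eq_card_fiber_snd [Fintype α] {t : ℕ} {F : Fin t → α → β} {E : Finset (α × β)}
    (hcol : ∀ a, Function.Injective fun i => F i a) (hE : ∀ a b, (a, b) ∈ E ↔ ∃ i, F i a = b)
    (b : β) : #{p : Fin t × α | F p.1 p.2 = b} = #{a | (a, b) ∈ E} := by
  refine card_bij (fun p _ => p.2) (fun p hp => ?_) (fun p hp q hq hpq => ?_) fun a ha => ?_
  · simp only [mem_filter, mem_univ, true_and] at hp ⊢
    exact (hE _ _).2 ⟨p.1, hp⟩
  · simp only [mem_filter, mem_univ, true_and] at hp hq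
    exact Prod.ext (hcol p.2 (hp.trans (hpq ▸ hq.symm))) hpq
  · obtain ⟨i, hi⟩ := (hE a b).1 (by simpa using ha)
    exact ⟨(i, a), by simpa using hi, rfl⟩

theorem exists_rows_iff_cutCondition [Fintype α] [Fintype β] (G : Finset (α × β)) (t : ℕ)
    (d : β → ℕ) (hd : ∑ b, d b = t * Fintype.card α) :
    (∃ F : Fin t → α → β, (∀ i, Function.Injective (F i)) ∧
        (∀ a, Function.Injective fun i => F i a) ∧ (∀ i a, (a, F i a) ∈ G) ∧
        ∀ b, #{p : Fin t × α | F p.1 p.2 = b} = d b) ↔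
      (∀ b, d b ≤ t) ∧ CutCondition G (fun _ => t) d := by
  constructor
  · rintro ⟨F, hrow, hcol, hFG, hFd⟩
    set E : Finset (α × β) := {p | ∃ i, F i p.1 = p.2}
    have hE : ∀ a b, (a, b) ∈ E ↔ ∃ i, F i a = b := by simp [E]
    refine ⟨fun b => ?_, cutCondition_of_subset (E := E) ?_ (fun a => ?_) fun b => ?_⟩
    · rw [← hFd b]
      refine (card_le_card_of_injOn Prod.fst (fun _ _ => mem_univ _) ?_).trans_eq (card_fin t)
      intro p hp q hq hpq
      rw [mem_coe, mem_filter] at hp hq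
      exact Prod.ext hpq (hrow p.1 (hp.2.trans (hpq ▸ hq.2.symm)))
    · rintro ⟨a, b⟩ hab
      obtain ⟨i, rfl⟩ := (hE a b).1 hab
      exact hFG i a
    · have : ({b | (a, b) ∈ E} : Finset β) = univ.image fun i => F i a := by ext; simp [hE]
      rw [this, card_image_of_injective _ (hcol a), card_fin]
    · rw [← card_rows_eq_card_fiber_snd hcol hE, hFd]
  · rintro ⟨hdt, hcut⟩
    obtain ⟨E, hEG, hEc, hEd⟩ := hcut.exists_subset_degrees (by simp [hd, mul_comm])
    obtain ⟨F, hrow, hcol, hE⟩ :=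
      exists_matching_decomposition t hEc fun b => (hEd b).trans_le (hdt b)
    refine ⟨F, hrow, hcol, fun i a => hEG ((hE _ _).2 ⟨i, rfl⟩), fun b => ?_⟩
    rw [card_rows_eq_card_fiber_snd hcol hE, hEd]

end Bipartite

section LatinRectangles

variable {r m n s k : ℕ}

lemma sum_symCount (L : Fin r → Fin s → Fin k) : ∑ ℓ, symCount L ℓ = r * s := by
  simp only [symCount]
  rw [← card_eq_sum_card_fiberwise fun p _ => mem_univ (L p.1 p.2), card_univ,
    Fintype.card_prod, Fintype.card_fin, Fintype.card_fin]

lemma latinArr_sumElim_comp_iff (e : Fin r ⊕ Fin m ≃ Fin n) (A : Fin r → Fin s → Fin k)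
    (B : Fin m → Fin s → Fin k) :
    latinArr (Sum.elim A B ∘ e.symm) ↔ latinArr A ∧ latinArr B ∧ ∀ i i' j, A i j ≠ B i' j := by
  have hrow : (∀ i, Function.Injective ((Sum.elim A B ∘ e.symm) i)) ↔
      (∀ i, Function.Injective (A i)) ∧ ∀ i, Function.Injective (B i) := by
    simp [e.surjective.forall, Sum.forall]
  have hcol : ∀ j, (fun i => (Sum.elim A B ∘ e.symm) i j) = Sum.elim (A · j) (B · j) ∘ e.symm :=
    fun j => funext fun i => by simp only [Function.comp_apply]; cases e.symm i <;> rfl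
  simp only [latinArr, hrow, hcol, Equiv.injective_comp, Sum.elim_injective, forall_and]
  tauto

lemma symCount_sumElim_comp (e : Fin r ⊕ Fin m ≃ Fin n) (A : Fin r → Fin s → Fin k)
    (B : Fin m → Fin s → Fin k) (ℓ : Fin k) :
    symCount (Sum.elim A B ∘ e.symm) ℓ = symCount A ℓ + symCount B ℓ := by
  simp only [symCount, card_filter, Fintype.sum_prod_type, Function.comp_apply]
  rw [e.symm.sum_comp (fun x => ∑ j, if Sum.elim A B x j = ℓ then 1 else 0),
    Fintype.sum_sum_type]
  rfl

lemma exists_completion_iff_exists_rows (ρ : Fin k → ℕ) (hrn : r ≤ n)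
    (L : Fin r → Fin n → Fin k) (hL : latinArr L) (he : ∀ ℓ, symCount L ℓ ≤ ρ ℓ) :
    (∃ S : Fin n → Fin n → Fin k, rhoLatinSquare ρ S ∧ extends' hrn le_rfl L S) ↔
      ∃ B : Fin (n - r) → Fin n → Fin k, latinArr B ∧ (∀ i j i', L i' j ≠ B i j) ∧
        ∀ ℓ, symCount B ℓ = ρ ℓ - symCount L ℓ := by
  let e : Fin r ⊕ Fin (n - r) ≃ Fin n := finSumFinEquiv.trans (finCongr (by omega))
  have he_inl : ∀ i, e (.inl i) = Fin.castLE hrn i := fun i => rfl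
  constructor
  · rintro ⟨S, ⟨hS, hSρ⟩, hSL⟩
    have hS_eq : S = Sum.elim L (S ∘ e ∘ .inr) ∘ e.symm := by
      funext i
      obtain ⟨x | x, rfl⟩ := e.surjective i
      · funext j
        simp only [Function.comp_apply, Equiv.symm_apply_apply, Sum.elim_inl]
        exact hSL x j
      · simp
    rw [hS_eq, latinArr_sumElim_comp_iff] at hS
    refine ⟨S ∘ e ∘ .inr, hS.2.1, fun i j i' => hS.2.2 i' i j, fun ℓ => ?_⟩
    have := symCount_sumElim_comp e L (S ∘ e ∘ .inr) ℓ
    rw [← hS_eq, hSρ] at this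
    omega
  · rintro ⟨B, hB, hLB, hBρ⟩
    refine ⟨Sum.elim L B ∘ e.symm,
      ⟨(latinArr_sumElim_comp_iff e L B).2 ⟨hL, hB, fun i i' j => hLB i' j i⟩, fun ℓ => ?_⟩,
      fun i j => ?_⟩
    · rw [symCount_sumElim_comp, hBρ, Nat.add_sub_cancel' (he ℓ)]
    · simp [← he_inl]

end LatinRectangles

theorem stmt6_general (n k r : ℕ) (hrn : r < n) (ρ : Fin k → ℕ) (hsum : ∑ ℓ, ρ ℓ = n ^ 2)
    (L : Fin r → Fin n → Fin k) (hL : latinArr L) (he : ∀ ℓ, symCount L ℓ ≤ ρ ℓ) :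
    (∃ S : Fin n → Fin n → Fin k, rhoLatinSquare ρ S ∧ extends' hrn.le le_rfl L S) ↔
      ((∀ ℓ, ρ ℓ - symCount L ℓ ≤ n - r) ∧
        ∀ (J : Finset (Fin n)) (K : Finset (Fin k)),
          ∑ ℓ ∈ K, (ρ ℓ - symCount L ℓ) ≤
            J.card * (n - r) + ∑ j ∈ Jᶜ, muSymCol L K j) := by
  let G : Finset (Fin n × Fin k) := {p | ∀ i, L i p.1 ≠ p.2}
  have hd : ∑ ℓ, (ρ ℓ - symCount L ℓ) = (n - r) * Fintype.card (Fin n) := by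
    rw [sum_tsub_distrib _ fun ℓ _ => he ℓ, hsum, sum_symCount, Fintype.card_fin, sq,
      Nat.sub_mul]
  rw [exists_completion_iff_exists_rows ρ hrn.le L hL he]
  convert exists_rows_iff_cutCondition G (n - r) (fun ℓ => ρ ℓ - symCount L ℓ) hd using 1
  · simp [latinArr, G, symCount, and_assoc]
  · simp only [CutCondition, crossing_eq_sum, sum_const, smul_eq_mul, muSymCol, G, mem_filter,
      mem_univ, true_and]

/-- Hall-type completion, mixed form: an `r × n` `ρ`-latin rectangle completes
to an `n × n` `ρ`-latin square iff `ρ_ℓ - e_ℓ ≤ n - r` for all `ℓ` and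
`∑_{ℓ∈K}(ρ_ℓ - e_ℓ) ≤ |J|(n-r) + μ_K([n] \ J)` for all `J ⊆ [n]`, `K ⊆ [k]`. -/
theorem stmt6 (n k r : ℕ) (hr : 1 ≤ r) (hrn : r < n) (hnk : n ≤ k)
    (ρ : Fin k → ℕ) (hρ1 : ∀ ℓ, 1 ≤ ρ ℓ) (hρn : ∀ ℓ, ρ ℓ ≤ n)
    (hsum : ∑ ℓ, ρ ℓ = n ^ 2)
    (L : Fin r → Fin n → Fin k) (hL : latinArr L)
    (he : ∀ ℓ, symCount L ℓ ≤ ρ ℓ) :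
    (∃ S : Fin n → Fin n → Fin k, rhoLatinSquare ρ S ∧ extends' hrn.le le_rfl L S) ↔
      ((∀ ℓ, ρ ℓ - symCount L ℓ ≤ n - r) ∧
        ∀ (J : Finset (Fin n)) (K : Finset (Fin k)),
          ∑ ℓ ∈ K, (ρ ℓ - symCount L ℓ) ≤
            J.card * (n - r) + ∑ j ∈ Jᶜ, muSymCol L K j) :=
  stmt6_general n k r hrn ρ hsum L hL he
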